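/- arXiv:0708.0656 — 3 statements merged into one kernel-verified Lean document; each statement's English description precedes it below -/
import Mathlib

section
/- Fix q ≥ 2, 0 ≤ t ≤ q^{k} − 1, k ≥ 0, and let π be a uniformly random permutation of {0,...,q−1}. For distinct c₁, c₂, c₃, c₄ ∈ {0,...,q−1} and a fixed a ∈ {0,...,q−1}, E[∏_{i=1}^{4} ψ_{0,0,c_i}(π(a)/q)] = −3/q². -/
/-! On the grid `b / q`, `ψ_{0,0,d}` equals `√q - 1/√q` at `b = d` and `-1/√q` elsewhere, and
`π a` is uniformly distributed, so the expectation is the average over `b` of the product. For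
distinct `cᵢ` the product is `(√q - 1/√q)(-1/√q)³ = -(q - 1)/q²` at the four points `b = cᵢ` and
`1/q²` at the other `q - 4`, so the average is `(4(1 - q) + (q - 4))/q³ = -3/q²`. -/

/-- The level-zero base-`q` Haar function
`ψ_{0,0,c}(x) = √q·𝟙{x ∈ [c/q,(c+1)/q)} − (1/√q)·𝟙{x ∈ [0,1)}`. -/
noncomputable def psi0 (q : ℕ) (c : Fin q) (x : ℝ) : ℝ :=
  Real.sqrt q * (if x ∈ Set.Ico ((c : ℝ) / q) (((c : ℝ) + 1) / q) then 1 else 0)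
    - (1 / Real.sqrt q) * (if x ∈ Set.Ico (0 : ℝ) 1 then 1 else 0)

theorem psi0_natCast_div {q : ℕ} (d b : Fin q) :
    psi0 q d ((b : ℕ) / (q : ℝ)) =
      if d = b then Real.sqrt q - 1 / Real.sqrt q else -(1 / Real.sqrt q) := by
  have hq : (0 : ℝ) < q := by exact_mod_cast b.pos
  have h_unit : ((b : ℕ) : ℝ) / q ∈ Set.Ico (0 : ℝ) 1 :=
    ⟨by positivity, (div_lt_one hq).2 (by exact_mod_cast b.isLt)⟩
  have h_cell : ((b : ℕ) : ℝ) / q ∈ Set.Ico ((d : ℝ) / q) (((d : ℝ) + 1) / q) ↔ d = b := by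
    rw [Set.mem_Ico, div_le_div_iff_of_pos_right hq, div_lt_div_iff_of_pos_right hq, Fin.ext_iff]
    norm_cast
    omega
  unfold psi0
  split_ifs <;> simp_all

theorem sum_perm_apply_div_factorial {α R : Type*} [Fintype α] [DecidableEq α] [Field R]
    [CharZero R] (f : α → R) (a : α) :
    (∑ π : Equiv.Perm α, f (π a)) / (Fintype.card α).factorial
      = (∑ b, f b) / Fintype.card α := by
  have h_indep : ∀ x, ∑ π : Equiv.Perm α, f (π x) = ∑ π : Equiv.Perm α, f (π a) := fun x =>
    Fintype.sum_equiv (Equiv.mulRight (Equiv.swap a x)) _ _ (by simp)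
  have h_card : (Fintype.card α : R) * ∑ π : Equiv.Perm α, f (π a)
      = (Fintype.card α).factorial * ∑ b, f b := by
    calc (Fintype.card α : R) * ∑ π : Equiv.Perm α, f (π a)
        = ∑ x, ∑ π : Equiv.Perm α, f (π x) := by simp [h_indep]
      _ = ∑ π : Equiv.Perm α, ∑ x, f (π x) := Finset.sum_comm
      _ = (Fintype.card α).factorial * ∑ b, f b := by
        simp [Equiv.sum_comp, Fintype.card_perm]
  have h_card_ne : (Fintype.card α : R) ≠ 0 := by
    exact_mod_cast (Fintype.card_pos_iff.2 ⟨a⟩).ne'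
  have h_fact_ne : ((Fintype.card α).factorial : R) ≠ 0 :=
    Nat.cast_ne_zero.2 (Nat.factorial_ne_zero _)
  rw [div_eq_div_iff h_fact_ne h_card_ne]
  linear_combination h_card

theorem prod_ite_apply_eq_of_injective {ι α M : Type*} [Fintype ι] [DecidableEq ι]
    [DecidableEq α] [CommMonoid M] {c : ι → α}
    (hc : Function.Injective c) (A B : M) (b : α) :
    ∏ i, (if c i = b then A else B)
      = if b ∈ Set.range c then A * B ^ (Fintype.card ι - 1) else B ^ Fintype.card ι := by
  split_ifs with hb
  · obtain ⟨j, rfl⟩ := hb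
    rw [← Finset.mul_prod_erase _ _ (Finset.mem_univ j), if_pos rfl,
      Finset.prod_congr rfl fun i hi => if_neg (hc.ne (Finset.ne_of_mem_erase hi)),
      Finset.prod_const, Finset.card_erase_of_mem (Finset.mem_univ j), Finset.card_univ]
  · rw [Finset.prod_congr rfl fun i _ => if_neg fun h => hb ⟨i, h⟩, Finset.prod_const,
      Finset.card_univ]

theorem sum_ite_mem_range_of_injective {ι α M : Type*} [Fintype ι] [Fintype α] [DecidableEq α]
    [AddCommGroup M] {c : ι → α} (hc : Function.Injective c) (X Y : M) :
    ∑ b, (if b ∈ Set.range c then X else Y)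
      = Fintype.card α • Y + Fintype.card ι • (X - Y) := by
  have h_split : ∀ b, (if b ∈ Set.range c then X else Y)
      = Y + if b ∈ Set.range c then X - Y else 0 := fun b => by split_ifs <;> abel
  rw [Finset.sum_congr rfl fun b _ => h_split b, Finset.sum_add_distrib, Finset.sum_const,
    ← Finset.sum_filter, Finset.sum_const, Finset.card_univ]
  have h_image : Finset.univ.filter (· ∈ Set.range c) = Finset.univ.image c := by ext; simp
  rw [h_image, Finset.card_image_of_injective _ hc, Finset.card_univ]

theorem psi0_fourth_mixed_general (q : ℕ) (c : Fin 4 → Fin q)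
    (hc : Function.Injective c) (a : Fin q) :
    (∑ π : Equiv.Perm (Fin q), ∏ i : Fin 4, psi0 q (c i) ((π a : ℕ) / (q : ℝ)))
        / (q.factorial : ℝ)
      = -3 / (q : ℝ) ^ 2 := by
  have hq : (0 : ℝ) < q := by exact_mod_cast a.pos
  have h_avg := sum_perm_apply_div_factorial
    (fun b : Fin q => ∏ i : Fin 4, psi0 q (c i) ((b : ℕ) / (q : ℝ))) a
  simp only [Fintype.card_fin] at h_avg
  rw [h_avg]
  simp only [psi0_natCast_div, prod_ite_apply_eq_of_injective hc,
    sum_ite_mem_range_of_injective hc, Fintype.card_fin, nsmul_eq_mul]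
  have h_sqrt : Real.sqrt q ^ 2 = q := Real.sq_sqrt hq.le
  have h_sqrt_ne : Real.sqrt q ≠ 0 := (Real.sqrt_pos.2 hq).ne'
  set s := Real.sqrt q
  clear_value s
  rw [← h_sqrt]
  norm_num
  field_simp
  ring

/-- For pairwise distinct `c₁,c₂,c₃,c₄` and a uniformly random permutation `π`,
`E[∏_{i=1}^4 ψ_{0,0,c_i}(π(a)/q)] = -3/q²`. -/
theorem psi0_fourth_mixed (q : ℕ) (hq : 2 ≤ q) (c : Fin 4 → Fin q)
    (hc : Function.Injective c) (a : Fin q) :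
    (∑ π : Equiv.Perm (Fin q), ∏ i : Fin 4, psi0 q (c i) ((π a : ℕ) / (q : ℝ)))
        / (q.factorial : ℝ)
      = -3 / (q : ℝ) ^ 2 :=
  psi0_fourth_mixed_general q c hc a
end

section
/- Let q ≥ 2, let u₁,...,u_m be uniformly random on {0,...,q−1} and suppose g : {0,...,q−1}^m → ℝ satisfies ∑_{c=0}^{q−1} g(c₁,...,c_{k−1}, c, c_{k+1},...,c_m) = 0 for every coordinate k and every choice of the other coordinates. Then for independent uniformly random permutations π₁,...,π_m of {0,...,q−1} and any fixed a₁,...,a_m, a'₁,...,a'_m ∈ {0,...,q−1} with a_k ≠ a'_k for all k = 1,...,m, E[g(π₁(a₁),...,π_m(a_m)) g(π₁(a'₁),...,π_m(a'_m))] = (−1/(q−1))^m E[g(π₁(a₁),...,π_m(a_m))²]. -/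
/-!
For one random permutation `σ` and `u ≠ v`, the sum `∑_σ G (σ u) * H (σ v)` does not depend on
`v ≠ u` (compose `σ` with the transposition of two candidates for `v`), while its sum over all `v`
vanishes because `H` sums to zero. Hence it is `-1/(q-1)` times the diagonal sum
`∑_σ G (σ u) * H (σ u)`. Peeling off the coordinates one at a time, with the other permutations
fixed, contributes this factor once per coordinate.
-/

open Finset Function Equiv

section

variable {R α : Type*} [CommRing R] [Fintype α] [DecidableEq α]

theorem sum_perm_apply_apply_eq_of_ne (F : α → α → R) {u v w : α} (hv : v ≠ u) (hw : w ≠ u) :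
    ∑ σ : Perm α, F (σ u) (σ v) = ∑ σ : Perm α, F (σ u) (σ w) := by
  rw [← Equiv.sum_comp (Equiv.mulRight (swap v w))]
  refine Fintype.sum_congr _ _ fun σ => ?_
  simp [swap_apply_of_ne_of_ne hv.symm hw.symm]

theorem card_sub_one_mul_sum_perm (G H : α → R) (hH : ∑ x, H x = 0) {u v : α} (huv : u ≠ v) :
    ((Fintype.card α : R) - 1) * ∑ σ : Perm α, G (σ u) * H (σ v)
      = -∑ σ : Perm α, G (σ u) * H (σ u) := by
  have total : ∑ w, ∑ σ : Perm α, G (σ u) * H (σ w) = 0 := by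
    rw [sum_comm]
    refine Fintype.sum_eq_zero _ fun σ => ?_
    rw [← mul_sum, Equiv.sum_comp σ H, hH, mul_zero]
  rw [Fintype.sum_eq_add_sum_compl u,
    sum_congr rfl fun w hw => sum_perm_apply_apply_eq_of_ne (fun x y => G x * H y)
      (by simpa using hw) huv.symm, sum_const, card_compl, card_singleton, nsmul_eq_mul,
    Nat.cast_sub (Fintype.card_pos_iff.mpr ⟨u⟩), Nat.cast_one] at total
  linear_combination total

theorem sum_pi_perm_fin_succ {m : ℕ} (F : (Fin (m + 1) → α) → (Fin (m + 1) → α) → R)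
    (a b : Fin (m + 1) → α) :
    ∑ π : Fin (m + 1) → Perm α, F (fun k => π k (a k)) (fun k => π k (b k))
      = ∑ σ : Perm α, ∑ ρ : Fin m → Perm α,
          F (Fin.cons (σ (a 0)) fun k => ρ k (a k.succ))
            (Fin.cons (σ (b 0)) fun k => ρ k (b k.succ)) := by
  have eval_cons (σ : Perm α) (ρ : Fin m → Perm α) (c : Fin (m + 1) → α) :
      (fun k => (Fin.cons σ ρ : Fin (m + 1) → Perm α) k (c k))
        = Fin.cons (σ (c 0)) fun k => ρ k (c k.succ) :=
    funext fun k => Fin.cases rfl (fun _ => rfl) k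
  rw [← (Fin.consEquiv fun _ => Perm α).sum_comp, Fintype.sum_prod_type]
  simp only [Fin.consEquiv_apply, eval_cons]

theorem card_sub_one_pow_mul_sum_pi_perm {m : ℕ} (g h : (Fin m → α) → R)
    (hh : ∀ k c, ∑ x, h (update c k x) = 0) (a a' : Fin m → α) (ha : ∀ k, a k ≠ a' k) :
    ((Fintype.card α : R) - 1) ^ m *
        ∑ π : Fin m → Perm α, g (fun k => π k (a k)) * h (fun k => π k (a' k))
      = (-1) ^ m * ∑ π : Fin m → Perm α, g (fun k => π k (a k)) * h (fun k => π k (a k)) := by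
  induction m with
  | zero =>
    simp only [pow_zero, one_mul]
    exact Fintype.sum_congr _ _ fun π => congrArg _ (congrArg h (funext fun k => k.elim0))
  | succ m ih =>
    set c : R := (Fintype.card α : R) - 1
    calc c ^ (m + 1) * ∑ π : Fin (m + 1) → Perm α,
            g (fun k => π k (a k)) * h (fun k => π k (a' k))
        = c * ∑ σ : Perm α, c ^ m * ∑ ρ : Fin m → Perm α,
            g (Fin.cons (σ (a 0)) fun k => ρ k (a k.succ)) *
              h (Fin.cons (σ (a' 0)) fun k => ρ k (a' k.succ)) := by
          rw [sum_pi_perm_fin_succ fun x y => g x * h y, pow_succ', mul_assoc, mul_sum]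
      _ = c * ∑ σ : Perm α, (-1) ^ m * ∑ ρ : Fin m → Perm α,
            g (Fin.cons (σ (a 0)) fun k => ρ k (a k.succ)) *
              h (Fin.cons (σ (a' 0)) fun k => ρ k (a k.succ)) := by
          congr 1
          refine Fintype.sum_congr _ _ fun σ => ?_
          refine ih (fun y => g (Fin.cons (σ (a 0)) y)) (fun y => h (Fin.cons (σ (a' 0)) y))
            (fun k y => ?_) _ _ fun k => ha k.succ
          simpa only [Fin.cons_update] using hh k.succ (Fin.cons (σ (a' 0)) y)
      _ = (-1) ^ m * ∑ ρ : Fin m → Perm α, c * ∑ σ : Perm α,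
            g (Fin.cons (σ (a 0)) fun k => ρ k (a k.succ)) *
              h (Fin.cons (σ (a' 0)) fun k => ρ k (a k.succ)) := by
          rw [← mul_sum, mul_left_comm, sum_comm, mul_sum]
      _ = (-1) ^ m * ∑ ρ : Fin m → Perm α, -∑ σ : Perm α,
            g (Fin.cons (σ (a 0)) fun k => ρ k (a k.succ)) *
              h (Fin.cons (σ (a 0)) fun k => ρ k (a k.succ)) := by
          congr 1
          refine Fintype.sum_congr _ _ fun ρ => ?_
          set A : Fin m → α := fun k => ρ k (a k.succ)
          refine card_sub_one_mul_sum_perm (fun x => g (Fin.cons x A)) (fun x => h (Fin.cons x A))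
            ?_ (ha 0)
          simpa only [Fin.update_cons_zero] using hh 0 (Fin.cons (a 0) A)
      _ = _ := by
          rw [sum_pi_perm_fin_succ fun x y => g x * h y, sum_comm, sum_neg_distrib, pow_succ]
          ring

end

theorem perm_anova_covariance_all_distinct_general (q m : ℕ) (hq : 2 ≤ q)
    (g : (Fin m → Fin q) → ℝ)
    (hg : ∀ (k : Fin m) (c : Fin m → Fin q), ∑ x : Fin q, g (Function.update c k x) = 0)
    (a a' : Fin m → Fin q) (ha : ∀ k, a k ≠ a' k) :
    (∑ π : Fin m → Equiv.Perm (Fin q),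
        g (fun k => π k (a k)) * g (fun k => π k (a' k))) / ((q.factorial : ℝ) ^ m)
      = (-(1 / ((q : ℝ) - 1))) ^ m *
        ((∑ π : Fin m → Equiv.Perm (Fin q), g (fun k => π k (a k)) ^ 2)
          / ((q.factorial : ℝ) ^ m)) := by
  have hq' : (q : ℝ) - 1 ≠ 0 := by
    have : (2 : ℝ) ≤ q := by exact_mod_cast hq
    linarith
  have key := card_sub_one_pow_mul_sum_pi_perm g g hg a a' ha
  rw [Fintype.card_fin] at key
  simp only [sq]
  rw [mul_div_assoc', div_left_inj' (by positivity), neg_pow, one_div, inv_pow,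
    ← mul_right_inj' (pow_ne_zero m hq'), key]
  field_simp

/-- For independent uniformly random permutations `π₁,…,π_m` of `{0,…,q−1}`, a function
`g` with the zero-sum (ANOVA) property in each coordinate, and fixed `a_k ≠ a'_k` for all
`k`, `E[g(π₁(a₁),…,π_m(a_m)) g(π₁(a'₁),…,π_m(a'_m))] = (−1/(q−1))^m E[g(π₁(a₁),…)²]`. -/
theorem perm_anova_covariance_all_distinct (q m : ℕ) (hq : 2 ≤ q) (hm : 1 ≤ m)
    (g : (Fin m → Fin q) → ℝ)
    (hg : ∀ (k : Fin m) (c : Fin m → Fin q), ∑ x : Fin q, g (Function.update c k x) = 0)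
    (a a' : Fin m → Fin q) (ha : ∀ k, a k ≠ a' k) :
    (∑ π : Fin m → Equiv.Perm (Fin q),
        g (fun k => π k (a k)) * g (fun k => π k (a' k))) / ((q.factorial : ℝ) ^ m)
      = (-(1 / ((q : ℝ) - 1))) ^ m *
        ((∑ π : Fin m → Equiv.Perm (Fin q), g (fun k => π k (a k)) ^ 2)
          / ((q.factorial : ℝ) ^ m)) :=
  perm_anova_covariance_all_distinct_general q m hq g hg a a' ha
end

section
/- Let q ≥ 2, m ≥ 1, let g : {0,...,q−1}^m → ℝ satisfy the zero-sum property in each coordinate, and let π₁,...,π_m be independent uniformly random permutations of {0,...,q−1}. Fix a₁,...,a_m and a'₁,...,a'_m in {0,...,q−1} with a₁ = a'₁ but a_k ≠ a'_k for k = 2,...,m. Then E[g(π₁(a₁),...,π_m(a_m)) g(π₁(a'₁),...,π_m(a'_m))] = (−1/(q−1))^{m−1} E[g(π₁(a₁),...,π_m(a_m))²]. -/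
/-!
Write `C(a, b)` for the sum over `π` of `g(π·a) g(π·b)`. Reindexing the sum by `π ↦ π ρ` shows
that `C` is invariant under the diagonal action of `ρ : ι → Perm α`, and the zero-sum property
gives `∑_c C(a, b[k ↦ c]) = 0`. If `a k ≠ b k`, a transposition at coordinate `k` fixing `a k`
moves `b k` to any `c ≠ a k`, so the `q - 1` terms with `c ≠ a k` all equal `C(a, b)` and hence
`C(a, b) = -(1/(q-1)) C(a, b[k ↦ a k])`. Repeating this at each coordinate where `a` and `b`
differ reduces `C(a, b)` to `C(a, a)`.
-/

open Finset Function

variable {ι α R : Type*} [Fintype ι] [DecidableEq ι] [Fintype α] [DecidableEq α]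

section Semiring

variable [NonUnitalNonAssocSemiring R]

/-- `(#(Perm α)) ^ #ι` times `E[g(π·a) g(π·b)]` for independent uniform permutations `π i`. -/
def permCorrelation (g : (ι → α) → R) (a b : ι → α) : R :=
  ∑ π : ι → Equiv.Perm α, g (fun i => π i (a i)) * g (fun i => π i (b i))

theorem permCorrelation_perm_apply (g : (ι → α) → R) (ρ : ι → Equiv.Perm α) (a b : ι → α) :
    permCorrelation g (fun i => ρ i (a i)) (fun i => ρ i (b i)) = permCorrelation g a b :=
  Fintype.sum_equiv (Equiv.mulRight ρ) _ _ fun π => by simp [Equiv.Perm.mul_apply]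

theorem sum_permCorrelation_update_right (g : (ι → α) → R) {k : ι}
    (hg : ∀ c : ι → α, ∑ x : α, g (update c k x) = 0) (a b : ι → α) :
    ∑ c : α, permCorrelation g a (update b k c) = 0 := by
  unfold permCorrelation
  rw [sum_comm]
  refine sum_eq_zero fun π _ => ?_
  have hπ (c : α) : (fun i => π i (update b k c i)) = update (fun i => π i (b i)) k (π k c) :=
    funext (apply_update (fun i => ⇑(π i)) b k c)
  simp only [hπ, ← mul_sum]
  rw [Equiv.sum_comp (π k) (fun x => g (update _ k x)), hg, mul_zero]

theorem permCorrelation_update_right_of_ne (g : (ι → α) → R) {a b : ι → α} {k : ι}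
    (hab : a k ≠ b k) {c : α} (hac : a k ≠ c) :
    permCorrelation g a (update b k c) = permCorrelation g a b := by
  set ρ : ι → Equiv.Perm α := Pi.mulSingle k (Equiv.swap (b k) c)
  have hρ := permCorrelation_perm_apply g ρ a b
  have ha : (fun i => ρ i (a i)) = a := by
    funext i
    rcases eq_or_ne i k with rfl | hi
    · simp [ρ, Equiv.swap_apply_of_ne_of_ne hab hac]
    · simp [ρ, hi]
  have hb : (fun i => ρ i (b i)) = update b k c := by
    funext i
    rcases eq_or_ne i k with rfl | hi
    · simp [ρ]
    · simp [ρ, hi]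
  rwa [ha, hb] at hρ

end Semiring

theorem permCorrelation_eq_of_ne [Field R] [CharZero R] (g : (ι → α) → R) {k : ι}
    (hg : ∀ c : ι → α, ∑ x : α, g (update c k x) = 0) {a b : ι → α}
    (hab : a k ≠ b k) :
    permCorrelation g a b
      = -(1 / ((Fintype.card α : R) - 1)) * permCorrelation g a (update b k (a k)) := by
  have hsum := sum_permCorrelation_update_right g hg a b
  rw [← add_sum_erase _ _ (mem_univ (a k)),
    sum_congr rfl fun c hc => permCorrelation_update_right_of_ne g hab (ne_of_mem_erase hc).symm,
    sum_const, card_erase_of_mem (mem_univ _), card_univ, nsmul_eq_mul,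
    Nat.cast_pred (Fintype.card_pos_iff.mpr ⟨a k⟩)] at hsum
  have hcard : (Fintype.card α : R) - 1 ≠ 0 := by
    rw [sub_ne_zero, Ne, Nat.cast_eq_one]
    exact (Fintype.one_lt_card_iff.mpr ⟨_, _, hab⟩).ne'
  field_simp
  linear_combination hsum

theorem permCorrelation_eq_pow_card [Field R] [CharZero R] (g : (ι → α) → R)
    (hg : ∀ (k : ι) (c : ι → α), ∑ x : α, g (update c k x) = 0) (a : ι → α) (s : Finset ι) :
    ∀ b : ι → α, (∀ i ∈ s, a i ≠ b i) → (∀ i ∉ s, a i = b i) →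
      permCorrelation g a b
        = (-(1 / ((Fintype.card α : R) - 1))) ^ #s * permCorrelation g a a := by
  induction s using Finset.induction_on with
  | empty =>
    intro b _ hb
    rw [show b = a from funext fun i => (hb i (notMem_empty i)).symm, card_empty, pow_zero,
      one_mul]
  | insert k t hkt ih =>
    intro b hne heq
    rw [permCorrelation_eq_of_ne g (hg k) (hne k (mem_insert_self k t)), card_insert_of_notMem hkt,
      pow_succ', mul_assoc]
    congr 1
    apply ih
    · intro i hi
      rw [update_of_ne (ne_of_mem_of_not_mem hi hkt)]
      exact hne i (mem_insert_of_mem hi)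
    · intro i hi
      rcases eq_or_ne i k with rfl | hik
      · simp
      · rw [update_of_ne hik]
        exact heq i (by simp [hik, hi])

theorem perm_anova_covariance_one_agreement_general (q m : ℕ)
    (g : (Fin m → Fin q) → ℝ)
    (hg : ∀ (k : Fin m) (c : Fin m → Fin q), ∑ x : Fin q, g (Function.update c k x) = 0)
    (a a' : Fin m → Fin q) (k₀ : Fin m) (hk₀ : a k₀ = a' k₀)
    (ha : ∀ k, k ≠ k₀ → a k ≠ a' k) :
    (∑ π : Fin m → Equiv.Perm (Fin q),
        g (fun k => π k (a k)) * g (fun k => π k (a' k))) / ((q.factorial : ℝ) ^ m)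
      = (-(1 / ((q : ℝ) - 1))) ^ (m - 1) *
        ((∑ π : Fin m → Equiv.Perm (Fin q), g (fun k => π k (a k)) ^ 2)
          / ((q.factorial : ℝ) ^ m)) := by
  have hcorr := permCorrelation_eq_pow_card g hg a (univ.erase k₀) a'
    (fun k hk => ha k (ne_of_mem_erase hk))
    (fun k hk => by obtain rfl : k = k₀ := (by simpa using hk); exact hk₀)
  rw [card_erase_of_mem (mem_univ k₀), card_univ, Fintype.card_fin, Fintype.card_fin] at hcorr
  simp only [permCorrelation, ← sq] at hcorr
  rw [hcorr, mul_div_assoc]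

/-- For independent uniformly random permutations `π₁,…,π_m` of `{0,…,q−1}`, a function
`g` with the zero-sum (ANOVA) property in each coordinate, and fixed `a, a'` agreeing in
exactly one coordinate `k₀` and differing elsewhere,
`E[g(π₁(a₁),…,π_m(a_m)) g(π₁(a'₁),…,π_m(a'_m))] = (−1/(q−1))^{m−1} E[g(π₁(a₁),…)²]`. -/
theorem perm_anova_covariance_one_agreement (q m : ℕ) (hq : 2 ≤ q) (hm : 1 ≤ m)
    (g : (Fin m → Fin q) → ℝ)
    (hg : ∀ (k : Fin m) (c : Fin m → Fin q), ∑ x : Fin q, g (Function.update c k x) = 0)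
    (a a' : Fin m → Fin q) (k₀ : Fin m) (hk₀ : a k₀ = a' k₀)
    (ha : ∀ k, k ≠ k₀ → a k ≠ a' k) :
    (∑ π : Fin m → Equiv.Perm (Fin q),
        g (fun k => π k (a k)) * g (fun k => π k (a' k))) / ((q.factorial : ℝ) ^ m)
      = (-(1 / ((q : ℝ) - 1))) ^ (m - 1) *
        ((∑ π : Fin m → Equiv.Perm (Fin q), g (fun k => π k (a k)) ^ 2)
          / ((q.factorial : ℝ) ^ m)) :=
  perm_anova_covariance_one_agreement_general q m g hg a a' k₀ hk₀ ha
end
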